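/- arXiv:1507.02482 — 3 statements merged into one kernel-verified Lean document; each statement's English description precedes it below -/
import Mathlib

section
/- Let σ², λ² be positive reals with 1 ≤ σ²/λ² ≤ c² for c ≥ 1, X ~ N(0,σ²), Y ~ N(0,λ²). Then for any measurable set S ⊂ ℝ: (1/c)·P[Y ∈ S] ≤ P[X ∈ S] ≤ c·P[Y ∈ S/c], where S/c = {x/c : x ∈ S}. -/
/-!
For `v ≤ w` Gaussian densities with a common mean satisfy `φ_v ≤ √(w/v) φ_w` pointwise: the
exponential factor only grows with the variance, and the normalising constants have ratio `√(w/v)`.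
Integrating gives `N(0,v)(S) ≤ √(w/v) N(0,w)(S)`. With `(v, w) = (λ², σ²)` this is the lower
bound; for the upper bound take `(v, w) = (σ², c²λ²)` and note that `N(0,λ²)(S/c) = N(0,c²λ²)(S)`.
-/

open ProbabilityTheory MeasureTheory Real
open scoped NNReal

theorem gaussianPDFReal_le_sqrt_div_mul {v w : ℝ≥0} (hv : 0 < v) (hvw : v ≤ w) (μ x : ℝ) :
    gaussianPDFReal μ v x ≤ √(w / v) * gaussianPDFReal μ w x := by
  have hv' : (0 : ℝ) < v := hv
  have hw' : (0 : ℝ) < w := hv'.trans_le hvw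
  have hnorm : √(w / v) * (√(2 * π * w))⁻¹ = (√(2 * π * v))⁻¹ := by
    rw [← Real.sqrt_inv, ← Real.sqrt_mul (by positivity), ← Real.sqrt_inv]
    congr 1
    field_simp
  have hexp : rexp (-(x - μ) ^ 2 / (2 * v)) ≤ rexp (-(x - μ) ^ 2 / (2 * w)) := by
    gcongr rexp ?_
    rw [neg_div, neg_div, neg_le_neg_iff]
    gcongr
  simp only [gaussianPDFReal]
  calc (√(2 * π * v))⁻¹ * rexp (-(x - μ) ^ 2 / (2 * v))
      ≤ (√(2 * π * v))⁻¹ * rexp (-(x - μ) ^ 2 / (2 * w)) :=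
        mul_le_mul_of_nonneg_left hexp (by positivity)
    _ = √(w / v) * ((√(2 * π * w))⁻¹ * rexp (-(x - μ) ^ 2 / (2 * w))) := by
      rw [← mul_assoc, hnorm]

theorem gaussianReal_le_mul_of_div_le_sq {v w k : ℝ≥0} (hv : 0 < v) (hvw : v ≤ w)
    (hk : (w : ℝ) / v ≤ k ^ 2) (μ : ℝ) (S : Set ℝ) :
    gaussianReal μ v S ≤ ENNReal.ofReal k * gaussianReal μ w S := by
  rw [gaussianReal_apply μ hv.ne', gaussianReal_apply μ (hv.trans_le hvw).ne',
    ← lintegral_const_mul _ (measurable_gaussianPDF μ w)]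
  refine lintegral_mono fun x => ?_
  rw [gaussianPDF, gaussianPDF, ← ENNReal.ofReal_mul k.coe_nonneg]
  refine ENNReal.ofReal_le_ofReal ((gaussianPDFReal_le_sqrt_div_mul hv hvw μ x).trans ?_)
  exact mul_le_mul_of_nonneg_right (Real.sqrt_le_iff.2 ⟨k.2, hk⟩) (gaussianPDFReal_nonneg μ w x)

theorem gaussianReal_image_div {c : ℝ≥0} (hc : c ≠ 0) (μ : ℝ) (v : ℝ≥0) (S : Set ℝ) :
    gaussianReal μ v ((· / (c : ℝ)) '' S) = gaussianReal (c * μ) (c ^ 2 * v) S := by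
  have hc' : (c : ℝ) ≠ 0 := NNReal.coe_ne_zero.2 hc
  have himage : (· / (c : ℝ)) '' S = ((c : ℝ) * ·) ⁻¹' S :=
    congrFun (Set.image_eq_preimage_of_inverse (fun x => by field_simp) (fun x => by field_simp)) S
  calc gaussianReal μ v ((· / (c : ℝ)) '' S)
      = (gaussianReal μ v).map ((c : ℝ) * ·) S := by
        rw [himage, ← MeasurableEquiv.coe_mulLeft₀ hc', MeasurableEquiv.map_apply]
    _ = gaussianReal (c * μ) (c ^ 2 * v) S := by
        rw [gaussianReal_map_const_mul]
        congr 3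

theorem gaussian_prob_ratio_close_general
    (s2 l2 : NNReal) (c : NNReal)
    (h1 : 1 ≤ (s2 : ℝ) / (l2 : ℝ)) (h2 : (s2 : ℝ) / (l2 : ℝ) ≤ (c : ℝ) ^ 2)
    (S : Set ℝ) :
    ENNReal.ofReal (1 / (c : ℝ)) * gaussianReal 0 l2 S ≤ gaussianReal 0 s2 S ∧
    gaussianReal 0 s2 S ≤
      ENNReal.ofReal (c : ℝ) * gaussianReal 0 l2 ((fun x : ℝ => x / (c : ℝ)) '' S) := by
  have hl : 0 < l2 := pos_of_ne_zero fun h => by norm_num [h] at h1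
  have hls : l2 ≤ s2 := by exact_mod_cast (one_le_div (NNReal.coe_pos.2 hl)).1 h1
  have hc : 0 < c := pos_of_ne_zero fun h => by norm_num [h] at h2; linarith
  constructor
  · calc ENNReal.ofReal (1 / c) * gaussianReal 0 l2 S
        ≤ ENNReal.ofReal (1 / c) * (ENNReal.ofReal c * gaussianReal 0 s2 S) := by
          gcongr
          exact gaussianReal_le_mul_of_div_le_sq hl hls h2 0 S
      _ = gaussianReal 0 s2 S := by
        rw [← mul_assoc, ← ENNReal.ofReal_mul (by positivity), one_div_mul_cancel (by positivity),
          ENNReal.ofReal_one, one_mul]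
  · have hsc : s2 ≤ c ^ 2 * l2 := by exact_mod_cast (div_le_iff₀ (NNReal.coe_pos.2 hl)).1 h2
    have hratio : ((c ^ 2 * l2 : ℝ≥0) : ℝ) / s2 ≤ c ^ 2 := by
      rw [NNReal.coe_mul, mul_div_assoc]
      exact mul_le_of_le_one_right (sq_nonneg _) (div_le_one_of_le₀ hls s2.2)
    rw [gaussianReal_image_div hc.ne', mul_zero]
    exact gaussianReal_le_mul_of_div_le_sq (hl.trans_le hls) hsc hratio 0 S

/-- for `X ~ N(0,σ²)`, `Y ~ N(0,λ²)` with `1 ≤ σ²/λ² ≤ c²`, `c ≥ 1`,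
and any measurable `S ⊆ ℝ`:
`(1/c)·P[Y ∈ S] ≤ P[X ∈ S] ≤ c·P[Y ∈ S/c]` where `S/c = {x/c : x ∈ S}`. -/
theorem gaussian_prob_ratio_close
    (s2 l2 : NNReal) (c : NNReal)
    (hs : 0 < s2) (hl : 0 < l2) (hc : 1 ≤ c)
    (h1 : 1 ≤ (s2 : ℝ) / (l2 : ℝ)) (h2 : (s2 : ℝ) / (l2 : ℝ) ≤ (c : ℝ) ^ 2)
    (S : Set ℝ) (hS : MeasurableSet S) :
    ENNReal.ofReal (1 / (c : ℝ)) * gaussianReal 0 l2 S ≤ gaussianReal 0 s2 S ∧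
    gaussianReal 0 s2 S ≤
      ENNReal.ofReal (c : ℝ) * gaussianReal 0 l2 ((fun x : ℝ => x / (c : ℝ)) '' S) :=
  gaussian_prob_ratio_close_general s2 l2 c h1 h2 S
end

section
/- Let X ∈ ℝ^{n×p} have full column rank and let w > 0. Then (XᵀX)⁻¹_{j,j} ≤ (1 + w²/σ_min(XᵀX)) · (XᵀX + w²I)⁻¹_{j,j} for every coordinate j, where σ_min(XᵀX) denotes the smallest eigenvalue of XᵀX. -/
open Matrix

private lemma conj_diag_inv {p : ℕ} (U : Matrix (Fin p) (Fin p) ℝ)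
    (hU : U * star U = 1) (hU' : star U * U = 1) (g : Fin p → ℝ) (hg : ∀ i, g i ≠ 0) :
    (U * diagonal g * star U)⁻¹ = U * diagonal g⁻¹ * star U := by
  apply inv_eq_right_inv
  calc U * diagonal g * star U * (U * diagonal g⁻¹ * star U)
      = U * diagonal g * (star U * U) * diagonal g⁻¹ * star U := by
        simp only [Matrix.mul_assoc]
    _ = U * (diagonal g * diagonal g⁻¹) * star U := by
        rw [hU']; simp only [Matrix.mul_one, Matrix.mul_assoc]
    _ = 1 := by
        rw [diagonal_mul_diagonal]
        have : (fun i => g i * g⁻¹ i) = fun _ => (1 : ℝ) := by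
          funext i; simp [mul_inv_cancel₀ (hg i)]
        rw [this, diagonal_one, Matrix.mul_one, hU]

private lemma conj_diag_entry {p : ℕ} (U : Matrix (Fin p) (Fin p) ℝ)
    (g : Fin p → ℝ) (j : Fin p) :
    (U * diagonal g * star U) j j = ∑ i, g i * (U j i) ^ 2 := by
  rw [Matrix.mul_apply]
  apply Finset.sum_congr rfl
  intro i _
  rw [Matrix.mul_diagonal, Matrix.star_apply, star_trivial]
  ring

/-- for `X` of full column rank and `w > 0`, each diagonal entry satisfies
`(XᵀX)⁻¹_{j,j} ≤ (1 + w²/σ_min(XᵀX)) · (XᵀX + w²I)⁻¹_{j,j}`, where `σ_min(XᵀX)`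
is the smallest eigenvalue of `XᵀX`. -/
theorem diag_inv_le_ridge_diag_inv
    {n p : ℕ} (X : Matrix (Fin n) (Fin p) ℝ) (hX : X.rank = p)
    (hH : (Xᵀ * X).IsHermitian) (w : ℝ) (hw : 0 < w) (j : Fin p) :
    (Xᵀ * X)⁻¹ j j ≤
      (1 + w ^ 2 / (⨅ i : Fin p, hH.eigenvalues i)) *
        ((Xᵀ * X + w ^ 2 • (1 : Matrix (Fin p) (Fin p) ℝ))⁻¹ j j) := by
  set A := Xᵀ * X with hA
  set lam := hH.eigenvalues with hlam
  set U : Matrix (Fin p) (Fin p) ℝ := (hH.eigenvectorUnitary : Matrix (Fin p) (Fin p) ℝ) with hUdef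
  have hU : U * star U = 1 := mem_unitaryGroup_iff.mp hH.eigenvectorUnitary.2
  have hU' : star U * U = 1 := mem_unitaryGroup_iff'.mp hH.eigenvectorUnitary.2
  have hspec : A = U * diagonal lam * star U := by
    have := hH.spectral_theorem
    simpa using this
  -- eigenvalues are positive
  have hps : A.PosSemidef := by
    rw [hA, ← conjTranspose_eq_transpose_of_trivial]
    exact posSemidef_conjTranspose_mul_self X
  have hnonneg : ∀ i, 0 ≤ lam i := fun i => hps.eigenvalues_nonneg i
  have hpos : ∀ i, 0 < lam i := by
    intro i
    rcases (hnonneg i).lt_or_eq with h | h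
    · exact h
    · exfalso
      have hcard : Fintype.card {i // hH.eigenvalues i ≠ 0} = p := by
        rw [← hH.rank_eq_card_non_zero_eigs, hA, rank_transpose_mul_self, hX]
      have hlt : Fintype.card {i // hH.eigenvalues i ≠ 0} < Fintype.card (Fin p) :=
        Fintype.card_subtype_lt (x := i) (by simp [← hlam, ← h])
      rw [Fintype.card_fin] at hlt
      omega
  -- the infimum of eigenvalues is positive and a lower bound
  have hne : Nonempty (Fin p) := ⟨j⟩
  obtain ⟨i0, hi0⟩ := Finite.exists_min lam
  have hinf_eq : (⨅ i, lam i) = lam i0 :=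
    le_antisymm (ciInf_le (Finite.bddBelow_range _) i0) (le_ciInf hi0)
  have hinf_pos : 0 < ⨅ i, lam i := hinf_eq ▸ hpos i0
  have hinf_le : ∀ i, (⨅ i, lam i) ≤ lam i := fun i => hinf_eq ▸ hi0 i
  -- inverse formulas
  have hAinv : A⁻¹ = U * diagonal lam⁻¹ * star U := by
    rw [hspec]
    exact conj_diag_inv U hU hU' lam (fun i => (hpos i).ne')
  have hBspec : A + w ^ 2 • (1 : Matrix (Fin p) (Fin p) ℝ)
      = U * diagonal (fun i => lam i + w ^ 2) * star U := by
    have h1 : diagonal (fun i => lam i + w ^ 2)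
        = diagonal lam + w ^ 2 • (1 : Matrix (Fin p) (Fin p) ℝ) := by
      rw [← diagonal_one, ← diagonal_smul, diagonal_add]
      funext i
      simp
    rw [h1, Matrix.mul_add, Matrix.add_mul, ← hspec]
    congr 1
    rw [Matrix.mul_smul, Matrix.mul_one, Matrix.smul_mul, hU]
  have hBinv : (A + w ^ 2 • (1 : Matrix (Fin p) (Fin p) ℝ))⁻¹
      = U * diagonal (fun i => lam i + w ^ 2)⁻¹ * star U := by
    rw [hBspec]
    exact conj_diag_inv U hU hU' _ (fun i => show lam i + w ^ 2 ≠ 0 from ne_of_gt (add_pos (hpos i) (pow_pos hw 2)))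
  rw [hAinv, hBinv, conj_diag_entry, conj_diag_entry, Finset.mul_sum]
  apply Finset.sum_le_sum
  intro i _
  have hsq : (0 : ℝ) ≤ (U j i) ^ 2 := sq_nonneg _
  have hli : 0 < lam i := hpos i
  have hlw : 0 < lam i + w ^ 2 := by positivity
  have key : (lam i)⁻¹ ≤ (1 + w ^ 2 / ⨅ i, lam i) * (fun i => lam i + w ^ 2)⁻¹ i := by
    have h1 : (1 + w ^ 2 / lam i) * (lam i + w ^ 2)⁻¹ = (lam i)⁻¹ := by
      field_simp
    have h2 : (1 + w ^ 2 / lam i) ≤ (1 + w ^ 2 / ⨅ i, lam i) := by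
      gcongr
      exact hinf_le i
    calc (lam i)⁻¹ = (1 + w ^ 2 / lam i) * (lam i + w ^ 2)⁻¹ := h1.symm
      _ ≤ (1 + w ^ 2 / ⨅ i, lam i) * (lam i + w ^ 2)⁻¹ := by
          apply mul_le_mul_of_nonneg_right h2 (by positivity)
      _ = (1 + w ^ 2 / ⨅ i, lam i) * (fun i => lam i + w ^ 2)⁻¹ i := by
          simp [Pi.inv_apply]
  calc lam⁻¹ i * U j i ^ 2 = (lam i)⁻¹ * U j i ^ 2 := by simp [Pi.inv_apply]
    _ ≤ ((1 + w ^ 2 / ⨅ i, lam i) * (fun i => lam i + w ^ 2)⁻¹ i) * U j i ^ 2 :=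
        mul_le_mul_of_nonneg_right key hsq
    _ = (1 + w ^ 2 / ⨅ i, lam i) * ((fun i => lam i + w ^ 2)⁻¹ i * U j i ^ 2) := by ring
end

section
/- Let X ∈ ℝ^{n×p} have full column rank, let R be an r×n matrix of i.i.d. standard Gaussian entries, and fix a vector e ∈ ℝ^n. Conditioned on X and M = RX (with M of full column rank), the conditional distribution of the first-stage estimator β̃ = β + M⁺Re (where y = Xβ + e) is N(β + X⁺e, ‖P_{U⊥}e‖²·(MᵀM)⁻¹), where P_{U⊥} = I − XX⁺ is the projection onto the orthogonal complement of the column span of X. -/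
/-!
Write `v = P_{U⊥} e` and `B = (MᵀM)⁻¹Mᵀ`, so that `BM = 1` and the estimator is
`β + X⁺e + B (R' v)`. The rows of `R'` are independent standard Gaussian vectors, so the
coordinates of `R' v` are independent `N(0, ‖v‖²)`, i.e. `R' v` has the law of `‖v‖ Z` with `Z`
standard Gaussian on `ℝ^r`. Finally, the law of `A Z` depends only on `A Aᵀ` (compare
characteristic functions), and `(‖v‖ B)(‖v‖ B)ᵀ = ‖v‖² (MᵀM)⁻¹`.
-/

open Matrix MeasureTheory ProbabilityTheory

/-- The multivariate Gaussian `N(m, S)` on `ℝ^p`, as the pushforward of the standard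
Gaussian by `z ↦ m + S^{1/2} z`, where `S^{1/2}` is the PSD square root. -/
noncomputable def mvGaussian {p : ℕ} (m : Fin p → ℝ) (S : Matrix (Fin p) (Fin p) ℝ)
    (hS : S.PosSemidef) : Measure (Fin p → ℝ) :=
  Measure.map (fun z => m + ((hS.1.eigenvectorUnitary : Matrix (Fin p) (Fin p) ℝ) *
      diagonal ((RCLike.ofReal : ℝ → ℝ) ∘ (√·) ∘ hS.1.eigenvalues) *
      (star hS.1.eigenvectorUnitary : Matrix (Fin p) (Fin p) ℝ)).mulVec z)
    (Measure.pi fun _ : Fin p => gaussianReal 0 1)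

open scoped MatrixOrder
open Complex

section StandardGaussian

variable {ι κ : Type*} [Fintype ι] [Fintype κ]

theorem charFun_map_dotProduct_pi_gaussianReal (c : ι → ℝ) (t : ℝ) :
    charFun ((Measure.pi fun _ : ι => gaussianReal 0 1).map (· ⬝ᵥ c)) t
      = cexp (-((∑ j, c j ^ 2) * t ^ 2 / 2)) := by
  rw [charFun_apply_real, integral_map (by fun_prop) (by fun_prop)]
  simp only [dotProduct, ofReal_sum, Finset.mul_sum, Finset.sum_mul, Complex.exp_sum]
  rw [integral_fintype_prod_eq_prod (f := fun j (x : ℝ) => cexp (t * ↑(x * c j) * I))]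
  have hcoord (j : ι) :
      ∫ x, cexp (t * ↑(x * c j) * I) ∂gaussianReal 0 1 = cexp (-(c j ^ 2 * t ^ 2 / 2)) := by
    have := charFun_apply_real (μ := gaussianReal 0 1) (t * c j)
    rw [charFun_gaussianReal] at this
    push_cast at this ⊢
    simp_rw [mul_comm _ (c j : ℂ), ← mul_assoc, ← this]
    congr 1; ring
  simp_rw [hcoord, ← Complex.exp_sum]
  push_cast
  simp [Finset.sum_div, ← Finset.sum_neg_distrib]

theorem map_dotProduct_pi_gaussianReal (c : ι → ℝ) :
    (Measure.pi fun _ : ι => gaussianReal 0 1).map (· ⬝ᵥ c)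
      = gaussianReal 0 (∑ j, c j ^ 2).toNNReal := by
  have : IsProbabilityMeasure ((Measure.pi fun _ : ι => gaussianReal 0 1).map (· ⬝ᵥ c)) :=
    Measure.isProbabilityMeasure_map (by fun_prop)
  refine Measure.ext_of_charFun (funext fun t => ?_)
  rw [charFun_map_dotProduct_pi_gaussianReal, charFun_gaussianReal,
    Real.coe_toNNReal _ (by positivity)]
  congr 1; push_cast; ring

theorem map_mulVec_of_pi_pi_gaussianReal (c : κ → ℝ) :
    (Measure.pi fun _ : ι => Measure.pi fun _ : κ => gaussianReal 0 1).map (fun R => of R *ᵥ c)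
      = (Measure.pi fun _ : ι => gaussianReal 0 1).map (fun z => √(∑ j, c j ^ 2) • z) := by
  have hrow : (Measure.pi fun _ : κ => gaussianReal 0 1).map (· ⬝ᵥ c)
      = (gaussianReal 0 1).map (√(∑ j, c j ^ 2) * ·) := by
    rw [map_dotProduct_pi_gaussianReal, gaussianReal_map_const_mul]
    congr
    · ring
    · ext; simp [Real.sq_sqrt, Finset.sum_nonneg, sq_nonneg]
  calc _ = Measure.pi fun _ : ι => (Measure.pi fun _ : κ => gaussianReal 0 1).map (· ⬝ᵥ c) :=
        Measure.pi_map_pi fun _ => by fun_prop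
    _ = _ := by
      rw [funext fun _ : ι => hrow]
      exact (Measure.pi_map_pi fun _ => by fun_prop).symm

theorem map_dotProduct_mulVec_pi_gaussianReal (A : Matrix κ ι ℝ) (l : κ → ℝ) :
    (Measure.pi fun _ : ι => gaussianReal 0 1).map (fun z => l ⬝ᵥ A *ᵥ z)
      = gaussianReal 0 (l ⬝ᵥ (A * Aᵀ) *ᵥ l).toNNReal := by
  have hvar : ∑ j, (l ᵥ* A) j ^ 2 = l ⬝ᵥ (A * Aᵀ) *ᵥ l := by
    rw [← mulVec_mulVec, dotProduct_mulVec, mulVec_transpose, dotProduct]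
    simp only [sq]
  have hfun : (fun z => l ⬝ᵥ A *ᵥ z) = (· ⬝ᵥ (l ᵥ* A)) := by
    funext z
    rw [dotProduct_mulVec, dotProduct_comm]
  rw [hfun, map_dotProduct_pi_gaussianReal, hvar]

theorem map_mulVec_pi_gaussianReal_eq_of_mul_transpose_eq {ι' : Type*} [Fintype ι']
    {A : Matrix κ ι ℝ} {D : Matrix κ ι' ℝ} (h : A * Aᵀ = D * Dᵀ) :
    (Measure.pi fun _ : ι => gaussianReal 0 1).map (A *ᵥ ·)
      = (Measure.pi fun _ : ι' => gaussianReal 0 1).map (D *ᵥ ·) := by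
  classical
  have : IsProbabilityMeasure ((Measure.pi fun _ : ι => gaussianReal 0 1).map (A *ᵥ ·)) :=
    Measure.isProbabilityMeasure_map (by fun_prop)
  have : IsProbabilityMeasure ((Measure.pi fun _ : ι' => gaussianReal 0 1).map (D *ᵥ ·)) :=
    Measure.isProbabilityMeasure_map (by fun_prop)
  refine Measure.ext_of_charFunDual (funext fun L => ?_)
  set l := fun i => L (Pi.single i 1)
  have hL (x : κ → ℝ) : L x = l ⬝ᵥ x := by
    rw [← L.sum_comp_single, dotProduct]
    refine Finset.sum_congr rfl fun i _ => ?_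
    rw [ContinuousLinearMap.comp_apply, ContinuousLinearMap.single_apply, mul_comm,
      ← smul_eq_mul, ← map_smul, ← Pi.single_smul', smul_eq_mul, mul_one]
  rw [charFunDual_eq_charFun_map_one, charFunDual_eq_charFun_map_one,
    Measure.map_map L.continuous.measurable (by fun_prop),
    Measure.map_map L.continuous.measurable (by fun_prop), Function.comp_def, Function.comp_def]
  simp_rw [hL, map_dotProduct_mulVec_pi_gaussianReal, h]

end StandardGaussian

theorem Matrix.PosSemidef.sqrt_eq_eigenvectorUnitary_mul {ι : Type*} [Fintype ι] [DecidableEq ι]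
    {S : Matrix ι ι ℝ} (hS : S.PosSemidef) :
    CFC.sqrt S = (hS.1.eigenvectorUnitary : Matrix ι ι ℝ) *
      diagonal ((RCLike.ofReal : ℝ → ℝ) ∘ (√·) ∘ hS.1.eigenvalues) *
      (star hS.1.eigenvectorUnitary : Matrix ι ι ℝ) := by
  rw [CFC.sqrt_eq_cfc, cfc_nnreal_eq_real _ S, hS.1.cfc_eq, IsHermitian.cfc,
    Unitary.conjStarAlgAut_apply]
  congr 3
  funext i
  simp [Function.comp_def, Real.coe_sqrt, Real.coe_toNNReal', hS.eigenvalues_nonneg i]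

theorem Matrix.PosSemidef.sqrt_mul_transpose_sqrt {ι : Type*} [Fintype ι] [DecidableEq ι]
    {S : Matrix ι ι ℝ} (hS : S.PosSemidef) : CFC.sqrt S * (CFC.sqrt S)ᵀ = S := by
  rw [← conjTranspose_eq_transpose_of_trivial,
    (nonneg_iff_posSemidef.mp (CFC.sqrt_nonneg S)).1.eq,
    CFC.sqrt_mul_sqrt_self S (nonneg_iff_posSemidef.mpr hS)]

theorem map_add_mulVec_pi_gaussianReal_eq_mvGaussian {ι : Type*} [Fintype ι] {p : ℕ}
    (m : Fin p → ℝ) {S : Matrix (Fin p) (Fin p) ℝ} (hS : S.PosSemidef) {A : Matrix (Fin p) ι ℝ}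
    (hA : A * Aᵀ = S) :
    (Measure.pi fun _ : ι => gaussianReal 0 1).map (fun z => m + A *ᵥ z) = mvGaussian m S hS := by
  rw [mvGaussian, ← hS.sqrt_eq_eigenvectorUnitary_mul]
  have hlaw := congrArg (Measure.map (m + ·)) (map_mulVec_pi_gaussianReal_eq_of_mul_transpose_eq
    (hA.trans hS.sqrt_mul_transpose_sqrt.symm))
  rwa [Measure.map_map (by fun_prop) (by fun_prop),
    Measure.map_map (by fun_prop) (by fun_prop)] at hlaw

theorem Matrix.isUnit_transpose_mul_self_of_rank_eq {m n R : Type*} [Fintype m] [Fintype n]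
    [DecidableEq n] [Field R] [LinearOrder R] [IsStrictOrderedRing R] {A : Matrix m n R}
    (hA : A.rank = Fintype.card n) : IsUnit (Aᵀ * A) := by
  rw [← mulVec_surjective_iff_isUnit, ← coe_mulVecLin, ← LinearMap.range_eq_top]
  apply Submodule.eq_top_of_finrank_eq
  rw [← rank, rank_transpose_mul_self, hA, Module.finrank_fintype_fun_eq_card]

theorem projected_ols_estimator_conditional_distribution_general
    {n p r : ℕ}
    (β : Fin p → ℝ) (e : Fin n → ℝ)
    (M : Matrix (Fin r) (Fin p) ℝ) (hM : M.rank = p)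
    (Xplus : Matrix (Fin p) (Fin n) ℝ)
    (Pperp : Matrix (Fin n) (Fin n) ℝ)
    (hS : (((∑ i : Fin n, Pperp.mulVec e i ^ 2)) • (Mᵀ * M)⁻¹).PosSemidef) :
    Measure.map
        (fun R' : Fin r → Fin n → ℝ =>
          β + ((Mᵀ * M)⁻¹ * Mᵀ).mulVec
            ((M * Xplus + Matrix.of R' * Pperp).mulVec e))
        (Measure.pi fun _ : Fin r => Measure.pi fun _ : Fin n => gaussianReal 0 1)
      = mvGaussian (β + Xplus.mulVec e)
          ((∑ i : Fin n, Pperp.mulVec e i ^ 2) • (Mᵀ * M)⁻¹) hS := by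
  set G := Mᵀ * M
  set v := Pperp *ᵥ e
  have hG : IsUnit G.det := (isUnit_iff_isUnit_det G).mp
    (isUnit_transpose_mul_self_of_rank_eq (by rw [hM, Fintype.card_fin]))
  have hleft : G⁻¹ * Mᵀ * M = 1 := by rw [Matrix.mul_assoc, nonsing_inv_mul G hG]
  have hBBt : (G⁻¹ * Mᵀ) * (G⁻¹ * Mᵀ)ᵀ = G⁻¹ := by
    rw [transpose_mul, transpose_transpose, transpose_nonsing_inv, transpose_mul,
      transpose_transpose, ← Matrix.mul_assoc, hleft, Matrix.one_mul]
  have hcov : (√(∑ i, v i ^ 2) • (G⁻¹ * Mᵀ)) * (√(∑ i, v i ^ 2) • (G⁻¹ * Mᵀ))ᵀ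
      = (∑ i, v i ^ 2) • G⁻¹ := by
    rw [transpose_smul, Matrix.smul_mul, Matrix.mul_smul, smul_smul, ← sq,
      Real.sq_sqrt (by positivity), hBBt]
  have hestimator : (fun R' : Fin r → Fin n → ℝ =>
        β + (G⁻¹ * Mᵀ) *ᵥ ((M * Xplus + of R' * Pperp) *ᵥ e))
      = (fun w => (β + Xplus *ᵥ e) + (G⁻¹ * Mᵀ) *ᵥ w) ∘ (fun R' => of R' *ᵥ v) := by
    funext R'
    rw [Function.comp_apply, add_mulVec, mulVec_add, mulVec_mulVec, ← Matrix.mul_assoc, hleft,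
      Matrix.one_mul, ← mulVec_mulVec e (of R'), add_assoc]
  have hrows : Measurable fun R' : Fin r → Fin n → ℝ => of R' *ᵥ v :=
    measurable_pi_lambda _ fun k => by simp only [mulVec, dotProduct, of_apply]; fun_prop
  rw [hestimator, ← Measure.map_map (by fun_prop) hrows, map_mulVec_of_pi_pi_gaussianReal,
    Measure.map_map (by fun_prop) (by fun_prop),
    ← map_add_mulVec_pi_gaussianReal_eq_mvGaussian _ hS hcov]
  simp_rw [Function.comp_def, mulVec_smul, smul_mulVec]

/-- conditioned on `X` and `M = RX` (so that `R = MX⁺ + R'·P_{U⊥}`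
with `R'` a fresh i.i.d. standard Gaussian matrix), the estimator
`β̃ = β + M⁺Re` (with `y = Xβ + e`, `e` fixed) is distributed
`N(β + X⁺e, ‖P_{U⊥}e‖²·(MᵀM)⁻¹)`, where `P_{U⊥} = I − XX⁺`. -/
theorem projected_ols_estimator_conditional_distribution
    {n p r : ℕ} (X : Matrix (Fin n) (Fin p) ℝ) (hX : X.rank = p)
    (β : Fin p → ℝ) (e : Fin n → ℝ)
    (M : Matrix (Fin r) (Fin p) ℝ) (hM : M.rank = p)
    (Xplus : Matrix (Fin p) (Fin n) ℝ) (hXplus : Xplus = (Xᵀ * X)⁻¹ * Xᵀ)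
    (Pperp : Matrix (Fin n) (Fin n) ℝ)
    (hPperp : Pperp = (1 : Matrix (Fin n) (Fin n) ℝ) - X * Xplus)
    (hS : (((∑ i : Fin n, Pperp.mulVec e i ^ 2)) • (Mᵀ * M)⁻¹).PosSemidef) :
    Measure.map
        (fun R' : Fin r → Fin n → ℝ =>
          β + ((Mᵀ * M)⁻¹ * Mᵀ).mulVec
            ((M * Xplus + Matrix.of R' * Pperp).mulVec e))
        (Measure.pi fun _ : Fin r => Measure.pi fun _ : Fin n => gaussianReal 0 1)
      = mvGaussian (β + Xplus.mulVec e)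
          ((∑ i : Fin n, Pperp.mulVec e i ^ 2) • (Mᵀ * M)⁻¹) hS :=
  projected_ols_estimator_conditional_distribution_general β e M hM Xplus Pperp hS
end
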